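/- Let $p\in(1,2)$, $k_3>0$, and $\phi_1(e) = k_3 e + \|e\|^{\frac{2(1-p)}{3p-2}} e$ on $\mathbb{R}^n$ (extended by $\phi_1(0)=0$). Then for all $e,\mu\in\mathbb{R}^n$ with $\|\mu\|\le\bar\mu$, $\|\phi_1(e+\mu) - \phi_1(e)\| \le k_3\bar\mu + 2^{\frac{2(p-1)}{3p-2}}\bar\mu^{\,1-\frac{2(p-1)}{3p-2}}$. -/

import Mathlib

open Set
open scoped NNReal

/-- Subadditivity of `rpow` for exponents in `[0,1]`. -/
lemma aux_rpow_sub_le {β r s : ℝ} (hβ0 : 0 ≤ β) (hβ1 : β ≤ 1) (hs : 0 ≤ s) (hsr : s ≤ r) :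
    r ^ β - s ^ β ≤ (r - s) ^ β := by
  have h := NNReal.rpow_add_le_add_rpow (Real.toNNReal (r - s)) (Real.toNNReal s) hβ0 hβ1
  have hrs : (0:ℝ) ≤ r - s := by linarith
  have hcoe : ((Real.toNNReal (r - s) + Real.toNNReal s : ℝ≥0) : ℝ) = r := by
    push_cast [Real.coe_toNNReal _ hrs, Real.coe_toNNReal _ hs]; ring
  have h' : ((Real.toNNReal (r - s) + Real.toNNReal s : ℝ≥0) : ℝ) ^ β
      ≤ (r - s) ^ β + s ^ β := by
    calc ((Real.toNNReal (r - s) + Real.toNNReal s : ℝ≥0) : ℝ) ^ β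
        = (((Real.toNNReal (r - s) + Real.toNNReal s) ^ β : ℝ≥0) : ℝ) := by
          rw [NNReal.coe_rpow]
      _ ≤ (((Real.toNNReal (r - s)) ^ β + (Real.toNNReal s) ^ β : ℝ≥0) : ℝ) := by
          exact_mod_cast h
      _ = (r - s) ^ β + s ^ β := by
          push_cast [NNReal.coe_rpow, Real.coe_toNNReal _ hrs, Real.coe_toNNReal _ hs]; ring
  rw [hcoe] at h'
  linarith

/-- Concavity bound: `r^β + s^β ≤ 2^(1-β) (r+s)^β`. -/
lemma aux_rpow_add_le {β r s : ℝ} (hβ0 : 0 ≤ β) (hβ1 : β ≤ 1) (hr : 0 ≤ r) (hs : 0 ≤ s) :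
    r ^ β + s ^ β ≤ 2 ^ (1 - β) * (r + s) ^ β := by
  have hc := (Real.concaveOn_rpow hβ0 hβ1).2 (mem_Ici.2 hr) (mem_Ici.2 hs)
    (by norm_num : (0:ℝ) ≤ 1/2) (by norm_num : (0:ℝ) ≤ 1/2) (by norm_num)
  simp only [smul_eq_mul] at hc
  have h2 : (1/2*r + 1/2*s) = (r+s)/2 := by ring
  rw [h2, Real.div_rpow (by linarith) (by norm_num)] at hc
  have h2β : (0:ℝ) < 2 ^ β := Real.rpow_pos_of_pos two_pos β
  have h2β' : (0:ℝ) < 2 ^ (1-β) := Real.rpow_pos_of_pos two_pos (1-β)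
  have key : (2:ℝ) ^ (1-β) * 2 ^ β = 2 := by
    rw [← Real.rpow_add two_pos]; norm_num
  have hc2 : 2 ^ β * (1/2 * r ^ β + 1/2 * s ^ β) ≤ 2 ^ β * ((r+s)^β / 2^β) :=
    mul_le_mul_of_nonneg_left hc h2β.le
  rw [mul_div_cancel₀ _ h2β.ne'] at hc2
  have h3 := mul_le_mul_of_nonneg_left hc2 h2β'.le
  calc r ^ β + s ^ β = 2 ^ (1-β) * (2 ^ β * (1/2 * r ^ β + 1/2 * s ^ β)) := by
        rw [← mul_assoc, key]; ring
    _ ≤ 2 ^ (1-β) * (r + s) ^ β := h3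

lemma aux_one_le : ∀ {β : ℝ}, β ≤ 1 → (1:ℝ) ≤ 2 ^ (1 - β) := fun hβ =>
  Real.one_le_rpow one_le_two (by linarith)

/-- The key Hölder estimate for the power map in an inner product space. -/
lemma aux_holder {F : Type*} [NormedAddCommGroup F] [InnerProductSpace ℝ F]
    {β : ℝ} (hβ0 : 0 < β) (hβ1 : β < 1) (a b : F) :
    ‖(‖a‖ ^ (β - 1)) • a - (‖b‖ ^ (β - 1)) • b‖ ≤ 2 ^ (1 - β) * ‖a - b‖ ^ β := by
  have h1β := aux_one_le hβ1.le
  rcases eq_or_ne a 0 with rfl | ha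
  · rcases eq_or_ne b 0 with rfl | hb
    · simp [Real.rpow_nonneg]
      positivity
    · have hb' : (0:ℝ) < ‖b‖ := norm_pos_iff.2 hb
      rw [norm_zero, Real.zero_rpow (by linarith : β - 1 ≠ 0), zero_smul, zero_sub, norm_neg,
        norm_smul, Real.norm_eq_abs, abs_of_nonneg (Real.rpow_nonneg (norm_nonneg b) _)]
      have : ‖b‖ ^ (β - 1) * ‖b‖ = ‖b‖ ^ β := by
        nth_rw 2 [← Real.rpow_one ‖b‖]
        rw [← Real.rpow_add hb']; ring_nf
      rw [this, zero_sub, norm_neg]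
      calc ‖b‖ ^ β = 1 * ‖b‖ ^ β := by ring
        _ ≤ 2 ^ (1 - β) * ‖b‖ ^ β :=
            mul_le_mul_of_nonneg_right h1β (Real.rpow_nonneg (norm_nonneg b) β)
  rcases eq_or_ne b 0 with rfl | hb
  · have ha' : (0:ℝ) < ‖a‖ := norm_pos_iff.2 ha
    rw [norm_zero, Real.zero_rpow (by linarith : β - 1 ≠ 0), zero_smul, sub_zero, sub_zero,
      norm_smul, Real.norm_eq_abs, abs_of_nonneg (Real.rpow_nonneg (norm_nonneg a) _)]
    have : ‖a‖ ^ (β - 1) * ‖a‖ = ‖a‖ ^ β := by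
      nth_rw 2 [← Real.rpow_one ‖a‖]
      rw [← Real.rpow_add ha']; ring_nf
    rw [this]
    have h0 : (0:ℝ) ≤ ‖a‖ ^ β := Real.rpow_nonneg (norm_nonneg a) β
    calc ‖a‖ ^ β = 1 * ‖a‖ ^ β := by ring
      _ ≤ 2 ^ (1 - β) * ‖a‖ ^ β := mul_le_mul_of_nonneg_right h1β h0
  -- main case: a ≠ 0, b ≠ 0
  set r := ‖a‖ with hr_def
  set s := ‖b‖ with hs_def
  have hr : (0:ℝ) < r := norm_pos_iff.2 ha
  have hs : (0:ℝ) < s := norm_pos_iff.2 hb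
  set A := r ^ (β - 1) with hA_def
  set B := s ^ (β - 1) with hB_def
  have hA : (0:ℝ) < A := Real.rpow_pos_of_pos hr _
  have hB : (0:ℝ) < B := Real.rpow_pos_of_pos hs _
  have hAr : A * r = r ^ β := by
    rw [hA_def]; nth_rw 2 [← Real.rpow_one r]
    rw [← Real.rpow_add hr]; ring_nf
  have hBs : B * s = s ^ β := by
    rw [hB_def]; nth_rw 2 [← Real.rpow_one s]
    rw [← Real.rpow_add hs]; ring_nf
  set c := (inner ℝ a b : ℝ) with hc_def
  set d := ‖a - b‖ with hd_def
  have hd0 : (0:ℝ) ≤ d := norm_nonneg _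
  have hd2 : d ^ 2 = r ^ 2 - 2 * c + s ^ 2 := norm_sub_sq_real a b
  have hL2 : ‖A • a - B • b‖ ^ 2 = A^2 * r^2 - 2 * (A*B) * c + B^2 * s^2 := by
    rw [norm_sub_sq_real, norm_smul, norm_smul, real_inner_smul_left, real_inner_smul_right,
      Real.norm_eq_abs, Real.norm_eq_abs, abs_of_pos hA, abs_of_pos hB]
    ring
  -- endpoints
  have hu1 : |r - s| ≤ d := abs_norm_sub_norm_le a b
  have hu2 : d ≤ r + s := norm_sub_le a b
  set u₁ := (r - s)^2 with hu1_def
  set u₂ := (r + s)^2 with hu2_def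
  have hmem : d^2 ∈ Icc u₁ u₂ := by
    constructor
    · rw [hu1_def, ← sq_abs]
      exact pow_le_pow_left₀ (abs_nonneg _) hu1 2
    · exact pow_le_pow_left₀ hd0 hu2 2
  have hu10 : (0:ℝ) ≤ u₁ := sq_nonneg _
  have hu20 : (0:ℝ) ≤ u₂ := sq_nonneg _
  -- squared endpoint estimates
  have hsq : ∀ y : ℝ, 0 ≤ y → (y^2) ^ β = (y ^ β)^2 := by
    intro y hy
    rw [← Real.rpow_natCast y 2, ← Real.rpow_natCast (y ^ β) 2, ← Real.rpow_mul hy,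
      ← Real.rpow_mul hy]
    congr 1
    push_cast
    ring
  have hQ2 : ((2:ℝ) ^ (1-β))^2 = 2 ^ (2 - 2*β) := by
    rw [← Real.rpow_natCast ((2:ℝ) ^ (1-β)) 2, ← Real.rpow_mul (by norm_num : (0:ℝ) ≤ 2)]
    congr 1
    push_cast
    ring
  have hE2 : A^2*r^2 - 2*(A*B)*c + B^2*s^2 - (A*B)*(d^2) + (A*B)*u₂
      ≤ 2 ^ (2 - 2*β) * u₂ ^ β := by
    have h := aux_rpow_add_le hβ0.le hβ1.le hr.le hs.le
    have hnn : (0:ℝ) ≤ r ^ β + s ^ β := by positivity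
    have hsqle : (r^β + s^β)^2 ≤ (2 ^ (1-β) * (r+s)^β)^2 := by
      apply pow_le_pow_left₀ hnn h
    rw [mul_pow, hQ2, ← hsq (r+s) (by linarith)] at hsqle
    have hexp : A^2*r^2 - 2*(A*B)*c + B^2*s^2 - (A*B)*(d^2) + (A*B)*u₂ = (r^β + s^β)^2 := by
      rw [hd2, hu2_def, ← hAr, ← hBs]; ring
    rw [hexp, hu2_def]
    exact hsqle
  have hE1 : A^2*r^2 - 2*(A*B)*c + B^2*s^2 - (A*B)*(d^2) + (A*B)*u₁
      ≤ 2 ^ (2 - 2*β) * u₁ ^ β := by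
    have habs : |r^β - s^β| ≤ 2 ^ (1-β) * |r - s| ^ β := by
      rcases le_total s r with h | h
      · rw [abs_of_nonneg (by
            have := Real.rpow_le_rpow hs.le h hβ0.le; linarith),
          abs_of_nonneg (by linarith)]
        calc r^β - s^β ≤ (r-s)^β := aux_rpow_sub_le hβ0.le hβ1.le hs.le h
          _ = 1 * (r-s)^β := by ring
          _ ≤ 2 ^ (1-β) * (r-s)^β :=
              mul_le_mul_of_nonneg_right h1β (Real.rpow_nonneg (by linarith) β)
      · rw [abs_of_nonpos (by
            have := Real.rpow_le_rpow hr.le h hβ0.le; linarith),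
          abs_of_nonpos (by linarith), neg_sub, neg_sub]
        calc s^β - r^β ≤ (s-r)^β := aux_rpow_sub_le hβ0.le hβ1.le hr.le h
          _ = 1 * (s-r)^β := by ring
          _ ≤ 2 ^ (1-β) * (s-r)^β :=
              mul_le_mul_of_nonneg_right h1β (Real.rpow_nonneg (by linarith) β)
    have hsqle : (r^β - s^β)^2 ≤ (2 ^ (1-β) * |r - s| ^ β)^2 := by
      rw [← sq_abs (r^β - s^β)]
      apply pow_le_pow_left₀ (abs_nonneg _) habs
    rw [mul_pow, hQ2, ← hsq |r-s| (abs_nonneg _), sq_abs] at hsqle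
    have hexp : A^2*r^2 - 2*(A*B)*c + B^2*s^2 - (A*B)*(d^2) + (A*B)*u₁ = (r^β - s^β)^2 := by
      rw [hd2, hu1_def, ← hAr, ← hBs]; ring
    rw [hexp, hu1_def]
    exact hsqle
  -- concavity interpolation
  have hu12 : u₁ ≤ u₂ := le_trans hmem.1 hmem.2
  have hseg : d^2 ∈ segment ℝ u₁ u₂ := by rw [segment_eq_Icc hu12]; exact hmem
  obtain ⟨ta, tb, hta, htb, htab, hteq⟩ := hseg
  simp only [smul_eq_mul] at hteq
  have hconc := (Real.concaveOn_rpow hβ0.le hβ1.le).2 (mem_Ici.2 hu10) (mem_Ici.2 hu20)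
    hta htb htab
  simp only [smul_eq_mul] at hconc
  rw [hteq] at hconc
  -- combine
  have hmain : A^2*r^2 - 2*(A*B)*c + B^2*s^2 ≤ 2 ^ (2 - 2*β) * (d^2) ^ β := by
    have h1 := mul_le_mul_of_nonneg_left hE1 hta
    have h2 := mul_le_mul_of_nonneg_left hE2 htb
    have hC : A^2*r^2 - 2*(A*B)*c + B^2*s^2
        = ta * (A^2*r^2 - 2*(A*B)*c + B^2*s^2 - (A*B)*(d^2) + (A*B)*u₁)
          + tb * (A^2*r^2 - 2*(A*B)*c + B^2*s^2 - (A*B)*(d^2) + (A*B)*u₂) := by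
      linear_combination (-(A^2*r^2 - 2*(A*B)*c + B^2*s^2 - (A*B)*(d^2))) * htab
        + (-(A*B)) * hteq
    have h2conc := mul_le_mul_of_nonneg_left hconc
      (by positivity : (0:ℝ) ≤ (2:ℝ) ^ (2 - 2*β))
    rw [hC]
    calc ta * (A^2*r^2 - 2*(A*B)*c + B^2*s^2 - (A*B)*(d^2) + (A*B)*u₁)
          + tb * (A^2*r^2 - 2*(A*B)*c + B^2*s^2 - (A*B)*(d^2) + (A*B)*u₂)
        ≤ ta * (2 ^ (2 - 2*β) * u₁ ^ β) + tb * (2 ^ (2 - 2*β) * u₂ ^ β) := add_le_add h1 h2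
      _ = 2 ^ (2 - 2*β) * (ta * u₁ ^ β + tb * u₂ ^ β) := by ring
      _ ≤ 2 ^ (2 - 2*β) * (d^2) ^ β := h2conc
  -- conclude
  have hRHS0 : (0:ℝ) ≤ 2 ^ (1-β) * d ^ β := by positivity
  have hfin : ‖A • a - B • b‖ ^ 2 ≤ (2 ^ (1-β) * d ^ β)^2 := by
    rw [hL2, mul_pow, hQ2, ← hsq d hd0]
    exact hmain
  exact (pow_le_pow_iff_left₀ (norm_nonneg _) hRHS0 two_ne_zero).1 hfin

theorem stmt12 {n : ℕ} (p k₃ barμ : ℝ) (hp : 1 < p) (hp2 : p < 2) (hk₃ : 0 < k₃) :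
    ∀ e μ : EuclideanSpace ℝ (Fin n), ‖μ‖ ≤ barμ →
      ‖(k₃ • (e + μ) + (‖e + μ‖ ^ (2 * (1 - p) / (3 * p - 2))) • (e + μ)) -
          (k₃ • e + (‖e‖ ^ (2 * (1 - p) / (3 * p - 2))) • e)‖ ≤
        k₃ * barμ + 2 ^ (2 * (p - 1) / (3 * p - 2)) * barμ ^ (1 - 2 * (p - 1) / (3 * p - 2)) := by
  intro e μ hμ
  set β : ℝ := 1 - 2 * (p - 1) / (3 * p - 2) with hβ_def
  have hden : (0:ℝ) < 3 * p - 2 := by linarith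
  have hfrac : 0 < 2 * (p - 1) / (3 * p - 2) := by
    apply div_pos <;> linarith
  have hfrac1 : 2 * (p - 1) / (3 * p - 2) < 1 := by
    rw [div_lt_one hden]; linarith
  have hβ0 : 0 < β := by rw [hβ_def]; linarith
  have hβ1 : β < 1 := by rw [hβ_def]; linarith
  have hexp : 2 * (1 - p) / (3 * p - 2) = β - 1 := by rw [hβ_def]; ring
  have h1β : 1 - β = 2 * (p - 1) / (3 * p - 2) := by rw [hβ_def]; ring
  rw [hexp]
  have hsplit : (k₃ • (e + μ) + (‖e + μ‖ ^ (β - 1)) • (e + μ)) -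
      (k₃ • e + (‖e‖ ^ (β - 1)) • e)
      = k₃ • μ + ((‖e + μ‖ ^ (β - 1)) • (e + μ) - (‖e‖ ^ (β - 1)) • e) := by
    rw [smul_add]; abel
  rw [hsplit]
  have hbar : 0 ≤ barμ := le_trans (norm_nonneg μ) hμ
  calc ‖k₃ • μ + ((‖e + μ‖ ^ (β - 1)) • (e + μ) - (‖e‖ ^ (β - 1)) • e)‖
      ≤ ‖k₃ • μ‖ + ‖(‖e + μ‖ ^ (β - 1)) • (e + μ) - (‖e‖ ^ (β - 1)) • e‖ := norm_add_le _ _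
    _ ≤ k₃ * barμ + 2 ^ (1 - β) * barμ ^ β := by
        apply add_le_add
        · rw [norm_smul, Real.norm_eq_abs, abs_of_pos hk₃]
          exact mul_le_mul_of_nonneg_left hμ hk₃.le
        · have h := aux_holder hβ0 hβ1 (e + μ) e
          have : e + μ - e = μ := by abel
          rw [this] at h
          refine le_trans h ?_
          have := Real.rpow_le_rpow (norm_nonneg μ) hμ hβ0.le
          have h2p : (0:ℝ) ≤ (2:ℝ) ^ (1-β) := by positivity
          exact mul_le_mul_of_nonneg_left ‹‖μ‖ ^ β ≤ barμ ^ β› h2p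
    _ = k₃ * barμ + 2 ^ (2 * (p - 1) / (3 * p - 2)) * barμ ^ (1 - 2 * (p - 1) / (3 * p - 2)) := by
        rw [h1β, hβ_def]
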